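/- Let λ ≥ 1 and 0 < R ≤ √n, and set α = 1/(2λ) and β = 1/(8λ²). Let p_1, …, p_n be points of the square [0,√n]², and partition the square into m × m congruent square cells with m = ⌈√(5n)/R⌉. Assume that every cell contains at least R²/λ and at most λR² of the points. Let G be the graph on [n] with an edge {i,j} (i ≠ j) whenever d(p_i, p_j) ≤ R, where d is the Euclidean distance. Then G is an (h, βR/√h)-expander for every h with αR² ≤ h ≤ n/2. -/

import Mathlib

open Finset MeasureTheory

noncomputable section

/-- Out-neighborhood `N_G(I)` of a set of nodes `I`. -/
def nbhd {n : ℕ} (G : SimpleGraph (Fin n)) (I : Finset (Fin n)) : Finset (Fin n) := by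
  classical exact Finset.univ.filter (fun v => v ∉ I ∧ ∃ u ∈ I, G.Adj u v)

/-- The informed sets of the flooding process on the graph sequence `Gs` with source `s`. -/
def informed {n : ℕ} (Gs : ℕ → SimpleGraph (Fin n)) (s : Fin n) : ℕ → Finset (Fin n)
  | 0 => {s}
  | t + 1 => informed Gs s t ∪ nbhd (Gs t) (informed Gs s t)

/-- `G` is an `(h,k)`-expander: every nonempty set of at most `h` nodes has
out-neighborhood of size at least `k` times its size. -/
def IsExpander {n : ℕ} (G : SimpleGraph (Fin n)) (h k : ℝ) : Prop :=
  ∀ I : Finset (Fin n), I.Nonempty → (I.card : ℝ) ≤ h →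
    k * (I.card : ℝ) ≤ ((nbhd G I).card : ℝ)

/-- Euclidean distance in the plane. -/
def euclDist (x y : ℝ × ℝ) : ℝ := Real.sqrt ((x.1 - y.1) ^ 2 + (x.2 - y.2) ^ 2)

/-- The grid `L_{n,ε}` of points `(iε, jε)`, `i, j ∈ ℕ`, `i, j ≤ √n/ε`. -/
def grid (n : ℕ) (ε : ℝ) : Finset (ℝ × ℝ) :=
  (Finset.range (⌊Real.sqrt n / ε⌋₊ + 1) ×ˢ Finset.range (⌊Real.sqrt n / ε⌋₊ + 1)).image
    (fun q => ((q.1 : ℝ) * ε, (q.2 : ℝ) * ε))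

/-- `Γ(x)`: grid points within (move) radius `r` of `x`. -/
def gamma (n : ℕ) (ε r : ℝ) (x : ℝ × ℝ) : Finset (ℝ × ℝ) := by
  classical exact (grid n ε).filter (fun y => euclDist x y ≤ r)

/-- The stationary distribution `π(x) = |Γ(x)| / Σ_y |Γ(y)|` of node positions. -/
def statDist (n : ℕ) (ε r : ℝ) (x : ℝ × ℝ) : ℝ :=
  if x ∈ grid n ε then
    ((gamma n ε r x).card : ℝ) / (∑ y ∈ grid n ε, ((gamma n ε r y).card : ℝ))
  else 0

/-- The `n` random positions `P` are independent, each distributed according to `π`. -/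
def IsIIDStationary (n : ℕ) (ε r : ℝ) {Ω : Type} [MeasurableSpace Ω] (μ : Measure Ω)
    (P : Ω → Fin n → ℝ × ℝ) : Prop :=
  ∀ f : Fin n → ℝ × ℝ, μ {ω | P ω = f} = ENNReal.ofReal (∏ i, statDist n ε r (f i))

/-- Number of cells per side: `m = ⌈√(5n)/R⌉`. -/
def numCells (n : ℕ) (R : ℝ) : ℕ := ⌈Real.sqrt (5 * n) / R⌉₊

/-- Side length of a cell. -/
def cellLen (n : ℕ) (R : ℝ) : ℝ := Real.sqrt n / (numCells n R : ℝ)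

/-- Membership of a point `x` in cell `(i,j)` of the `m × m` partition of the square
`[0,√n]²` (cells are half-open, except that the last row/column is closed above,
points of the square being below `√n` anyway). -/
def inCell (n : ℕ) (R : ℝ) (i j : ℕ) (x : ℝ × ℝ) : Prop :=
  ((i : ℝ) * cellLen n R ≤ x.1 ∧ (x.1 < ((i : ℝ) + 1) * cellLen n R ∨ i + 1 = numCells n R)) ∧
  ((j : ℝ) * cellLen n R ≤ x.2 ∧ (x.2 < ((j : ℝ) + 1) * cellLen n R ∨ j + 1 = numCells n R))

/-- The number of nodes whose positions (given by `p`) lie in cell `(i,j)`. -/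
def cellCount (n : ℕ) (R : ℝ) (p : Fin n → ℝ × ℝ) (i j : ℕ) : ℕ := by
  classical exact (Finset.univ.filter fun v => inCell n R i j (p v)).card

/-- The geometric graph: an edge between distinct `u, v` iff their positions are at
Euclidean distance at most `R`. -/
def geoGraph (n : ℕ) (R : ℝ) (p : Fin n → ℝ × ℝ) : SimpleGraph (Fin n) :=
  SimpleGraph.fromRel (fun u v => euclDist (p u) (p v) ≤ R)

/-- `x` lies in the square `[0,√n]²`. -/
def inSquare (n : ℕ) (x : ℝ × ℝ) : Prop :=
  0 ≤ x.1 ∧ x.1 ≤ Real.sqrt n ∧ 0 ≤ x.2 ∧ x.2 ≤ Real.sqrt n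

/-- The random graph `G` is distributed as the Erdős–Rényi graph `G_{n,p}`. -/
def IsErdosRenyi {n : ℕ} {Ω : Type} [MeasurableSpace Ω] (μ : Measure Ω)
    (G : Ω → SimpleGraph (Fin n)) (p : ℝ) : Prop :=
  ∀ H : SimpleGraph (Fin n),
    μ {ω | G ω = H} =
      ENNReal.ofReal (p ^ (Nat.card H.edgeSet) * (1 - p) ^ (n.choose 2 - Nat.card H.edgeSet))


/-!
Index the cells by the grid graph `P_m □ P_m` and let `P` be the set of cells met by `I`.
Since a cell has side at most `R / √5`, every node outside `I` in a cell of `P`, and every node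
in a cell of the vertex boundary `∂P`, is a neighbour of `I`. The grid isoperimetric inequality
`min (|P|, m² - |P|) ≤ |∂P|²` (a row or column meeting both `P` and its complement contains a
cell of `∂P`) together with the bounds `R²/λ ≤ count ≤ λR²` on the cells gives
`|I| R² ≤ 8 λ⁴ |N(I)|²` whenever `|I| ≤ n/2`, and for `|I| ≤ h` this implies the claimed bound.
-/

open SimpleGraph

section VertexBoundary

variable {V W : Type*} [Fintype V]

def vertexBoundary (G : SimpleGraph V) (S : Finset V) : Finset V := by
  classical exact univ.filter fun v => v ∉ S ∧ ∃ u ∈ S, G.Adj u v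

variable {G : SimpleGraph V} {S : Finset V}

lemma mem_vertexBoundary {v : V} : v ∈ vertexBoundary G S ↔ v ∉ S ∧ ∃ u ∈ S, G.Adj u v := by
  simp [vertexBoundary]

lemma exists_mem_vertexBoundary {H : SimpleGraph W} (hH : H.Preconnected) (f : H →g G)
    {a b : W} (ha : f a ∈ S) (hb : f b ∉ S) : ∃ y, f y ∈ vertexBoundary G S := by
  obtain ⟨walk⟩ := hH a b
  obtain ⟨d, -, hd₁, hd₂⟩ := walk.exists_boundary_dart (f ⁻¹' S) ha hb
  exact ⟨d.snd, mem_vertexBoundary.2 ⟨hd₂, f d.fst, hd₁, f.map_adj d.adj⟩⟩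

end VertexBoundary

section SquareGrid

abbrev squareGrid (m : ℕ) : SimpleGraph (Fin m × Fin m) := pathGraph m □ pathGraph m

variable {m : ℕ} (S : Finset (Fin m × Fin m))

def mixedRows : Finset (Fin m) := univ.filter fun i => (∃ j, (i, j) ∈ S) ∧ ∃ j, (i, j) ∉ S

def mixedCols : Finset (Fin m) := univ.filter fun j => (∃ i, (i, j) ∈ S) ∧ ∃ i, (i, j) ∉ S

lemma mixedRows_compl : mixedRows Sᶜ = mixedRows S := by
  ext; simp [mixedRows, and_comm]

lemma mixedCols_compl : mixedCols Sᶜ = mixedCols S := by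
  ext; simp [mixedCols, and_comm]

lemma card_mixedRows_le : #(mixedRows S) ≤ #(vertexBoundary (squareGrid m) S) := by
  classical
  refine le_trans (card_le_card fun i hi => ?_) (card_image_le (f := Prod.fst))
  obtain ⟨⟨j, hj⟩, j', hj'⟩ := (mem_filter.1 hi).2
  obtain ⟨y, hy⟩ := exists_mem_vertexBoundary (pathGraph_preconnected m)
    (boxProdRight (pathGraph m) (pathGraph m) i).toHom hj hj'
  exact mem_image.2 ⟨_, hy, rfl⟩

lemma card_mixedCols_le : #(mixedCols S) ≤ #(vertexBoundary (squareGrid m) S) := by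
  classical
  refine le_trans (card_le_card fun j hj => ?_) (card_image_le (f := Prod.snd))
  obtain ⟨⟨i, hi⟩, i', hi'⟩ := (mem_filter.1 hj).2
  obtain ⟨y, hy⟩ := exists_mem_vertexBoundary (pathGraph_preconnected m)
    (boxProdLeft (pathGraph m) (pathGraph m) j).toHom hi hi'
  exact mem_image.2 ⟨_, hy, rfl⟩

lemma card_mixedRows_mul_card_mixedCols_le :
    #(mixedRows S) * #(mixedCols S) ≤ #(vertexBoundary (squareGrid m) S) ^ 2 :=
  (Nat.mul_le_mul (card_mixedRows_le S) (card_mixedCols_le S)).trans_eq (sq _).symm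

lemma card_le_card_mixedRows_mul_card_mixedCols (hrow : ∀ i, ∃ j, (i, j) ∉ S)
    (hcol : ∀ j, ∃ i, (i, j) ∉ S) : #S ≤ #(mixedRows S) * #(mixedCols S) := by
  rw [← card_product]
  refine card_le_card fun c hc => mem_product.2 ⟨?_, ?_⟩
  · exact mem_filter.2 ⟨mem_univ _, ⟨c.2, hc⟩, hrow c.1⟩
  · exact mem_filter.2 ⟨mem_univ _, ⟨c.1, hc⟩, hcol c.2⟩

/-- A line of the grid lying in `S` and a line lying outside `S` must be parallel, so every
line crossing them meets both `S` and its complement. -/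
lemma le_card_vertexBoundary_of_full_lines
    (hS : (∃ i, ∀ j, (i, j) ∈ S) ∨ ∃ j, ∀ i, (i, j) ∈ S)
    (hSc : (∃ i, ∀ j, (i, j) ∉ S) ∨ ∃ j, ∀ i, (i, j) ∉ S) :
    m ≤ #(vertexBoundary (squareGrid m) S) := by
  rcases hS with ⟨i, hi⟩ | ⟨j, hj⟩ <;> rcases hSc with ⟨i', hi'⟩ | ⟨j', hj'⟩
  · have : mixedCols S = univ := eq_univ_of_forall fun j =>
      mem_filter.2 ⟨mem_univ _, ⟨i, hi j⟩, i', hi' j⟩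
    simpa [this] using card_mixedCols_le S
  · exact absurd (hi j') (hj' i)
  · exact absurd (hj i') (hi' j)
  · have : mixedRows S = univ := eq_univ_of_forall fun i =>
      mem_filter.2 ⟨mem_univ _, ⟨j, hj i⟩, j', hj' i⟩
    simpa [this] using card_mixedRows_le S

theorem min_card_le_card_vertexBoundary_sq :
    min #S #Sᶜ ≤ #(vertexBoundary (squareGrid m) S) ^ 2 := by
  by_cases hS : (∀ i, ∃ j, (i, j) ∉ S) ∧ ∀ j, ∃ i, (i, j) ∉ S
  · exact (min_le_left _ _).trans <| (card_le_card_mixedRows_mul_card_mixedCols S hS.1 hS.2).trans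
      (card_mixedRows_mul_card_mixedCols_le S)
  refine (min_le_right _ _).trans ?_
  by_cases hSc : (∀ i, ∃ j, (i, j) ∈ S) ∧ ∀ j, ∃ i, (i, j) ∈ S
  · have := card_le_card_mixedRows_mul_card_mixedCols Sᶜ (by simpa using hSc.1)
      (by simpa using hSc.2)
    rw [mixedRows_compl, mixedCols_compl] at this
    exact this.trans (card_mixedRows_mul_card_mixedCols_le S)
  rw [not_and_or] at hS hSc
  push Not at hS hSc
  have hm := le_card_vertexBoundary_of_full_lines S hS hSc
  calc #Sᶜ ≤ #(univ : Finset (Fin m × Fin m)) := card_le_univ _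
    _ = m ^ 2 := by simp [sq]
    _ ≤ _ := Nat.pow_le_pow_left hm 2

lemma abs_sub_add_abs_sub_le_one {c d : Fin m × Fin m} (h : c = d ∨ (squareGrid m).Adj c d) :
    |((c.1 : ℕ) : ℝ) - (d.1 : ℕ)| + |((c.2 : ℕ) : ℝ) - (d.2 : ℕ)| ≤ 1 := by
  rcases h with rfl | h
  · simp
  · simp only [boxProd_adj, pathGraph_adj, Fin.ext_iff] at h
    rcases h with ⟨h | h, h'⟩ | ⟨h | h, h'⟩ <;> simp [← h, h']

end SquareGrid

section Cells

variable {n : ℕ} {R : ℝ}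

def inStrip (n : ℕ) (R : ℝ) (i : ℕ) (t : ℝ) : Prop :=
  (i : ℝ) * cellLen n R ≤ t ∧ (t < ((i : ℝ) + 1) * cellLen n R ∨ i + 1 = numCells n R)

lemma inCell_iff {i j : ℕ} {x : ℝ × ℝ} :
    inCell n R i j x ↔ inStrip n R i x.1 ∧ inStrip n R j x.2 := Iff.rfl

lemma numCells_pos (hn : 0 < n) (hR : 0 < R) : 0 < numCells n R :=
  Nat.ceil_pos.2 (div_pos (Real.sqrt_pos.2 (by positivity)) hR)

lemma cellLen_pos (hn : 0 < n) (hR : 0 < R) : 0 < cellLen n R :=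
  div_pos (Real.sqrt_pos.2 (by exact_mod_cast hn)) (by exact_mod_cast numCells_pos hn hR)

lemma numCells_mul_cellLen (hm : numCells n R ≠ 0) :
    (numCells n R : ℝ) * cellLen n R = Real.sqrt n :=
  mul_div_cancel₀ _ (by exact_mod_cast hm)

lemma five_mul_cellLen_sq_le (hR : 0 < R) : 5 * cellLen n R ^ 2 ≤ R ^ 2 := by
  rcases (numCells n R).eq_zero_or_pos with hm | hm
  · simp [cellLen, hm, sq_nonneg]
  have hmR : (0 : ℝ) < numCells n R := by exact_mod_cast hm
  have hceil : Real.sqrt 5 * Real.sqrt n ≤ R * numCells n R := by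
    rw [← Real.sqrt_mul (by norm_num), ← div_le_iff₀' hR]
    exact Nat.le_ceil _
  have hlen : Real.sqrt 5 * cellLen n R ≤ R := by
    rw [cellLen, ← mul_div_assoc, div_le_iff₀ hmR]
    exact hceil
  calc 5 * cellLen n R ^ 2 = (Real.sqrt 5 * cellLen n R) ^ 2 := by
        rw [mul_pow, Real.sq_sqrt (by norm_num)]
    _ ≤ R ^ 2 := pow_le_pow_left₀ (by unfold cellLen; positivity) hlen 2

/-- The strip containing `t` is found by rounding `t / cellLen` down, except that the top edge
`t = √n` belongs to the last strip. -/
lemma inStrip_iff (hn : 0 < n) (hR : 0 < R) {t : ℝ} (ht₀ : 0 ≤ t) (ht : t ≤ Real.sqrt n)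
    {i : ℕ} (hi : i < numCells n R) :
    inStrip n R i t ↔ i = min ⌊t / cellLen n R⌋₊ (numCells n R - 1) := by
  have hℓ := cellLen_pos hn hR
  have htop : t ≤ (numCells n R : ℝ) * cellLen n R := by
    rwa [numCells_mul_cellLen (numCells_pos hn hR).ne']
  have hfloor : ∀ k : ℕ, (k : ℝ) * cellLen n R ≤ t ↔ k ≤ ⌊t / cellLen n R⌋₊ := fun k => by
    rw [Nat.le_floor_iff (div_nonneg ht₀ hℓ.le), le_div_iff₀ hℓ]
  have hceil : ∀ k : ℕ, t < ((k : ℝ) + 1) * cellLen n R ↔ ⌊t / cellLen n R⌋₊ < k + 1 := fun k => by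
    rw [Nat.floor_lt (div_nonneg ht₀ hℓ.le), div_lt_iff₀ hℓ]; push_cast; rfl
  have hbelow : ⌊t / cellLen n R⌋₊ ≤ numCells n R :=
    Nat.floor_le_of_le ((div_le_iff₀ hℓ).2 htop)
  rw [inStrip, hfloor, hceil]
  omega

lemma inStrip.le_and_le {i : ℕ} {t : ℝ} (h : inStrip n R i t) (ht : t ≤ Real.sqrt n) :
    (i : ℝ) * cellLen n R ≤ t ∧ t ≤ ((i : ℝ) + 1) * cellLen n R := by
  refine ⟨h.1, h.2.elim le_of_lt fun hlast => ?_⟩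
  have : (i : ℝ) + 1 = numCells n R := by exact_mod_cast hlast
  rwa [this, numCells_mul_cellLen (by omega)]

lemma abs_sub_le_of_inStrip {i j : ℕ} {s t : ℝ} (his : inStrip n R i s) (hjt : inStrip n R j t)
    (hs : s ≤ Real.sqrt n) (ht : t ≤ Real.sqrt n) :
    |s - t| ≤ (|(i : ℝ) - j| + 1) * cellLen n R := by
  obtain ⟨hs₁, hs₂⟩ := his.le_and_le hs
  obtain ⟨ht₁, ht₂⟩ := hjt.le_and_le ht
  have hℓ : 0 ≤ cellLen n R := by unfold cellLen; positivity
  rw [abs_le]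
  constructor <;> nlinarith [le_abs_self ((i : ℝ) - j), neg_abs_le ((i : ℝ) - j)]

/-- The coordinate gaps are at most `cellLen` and `2 * cellLen`, and `5 * cellLen ^ 2 ≤ R ^ 2`. -/
lemma euclDist_le_of_inCell (hR : 0 < R) {x y : ℝ × ℝ} (hx : inSquare n x) (hy : inSquare n y)
    {i j i' j' : ℕ} (hxc : inCell n R i j x) (hyc : inCell n R i' j' y)
    (hnear : |(i : ℝ) - i'| + |(j : ℝ) - j'| ≤ 1) : euclDist x y ≤ R := by
  have h₁ := pow_le_pow_left₀ (abs_nonneg _)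
    (abs_sub_le_of_inStrip hxc.1 hyc.1 hx.2.1 hy.2.1) 2
  have h₂ := pow_le_pow_left₀ (abs_nonneg _)
    (abs_sub_le_of_inStrip hxc.2 hyc.2 hx.2.2.2 hy.2.2.2) 2
  rw [sq_abs, mul_pow] at h₁ h₂
  have hab : (|(i : ℝ) - i'| + 1) ^ 2 + (|(j : ℝ) - j'| + 1) ^ 2 ≤ 5 := by
    nlinarith [abs_nonneg ((i : ℝ) - i'), abs_nonneg ((j : ℝ) - j')]
  have h5 := mul_le_mul_of_nonneg_right hab (sq_nonneg (cellLen n R))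
  rw [euclDist, Real.sqrt_le_left hR.le]
  linarith [five_mul_cellLen_sq_le (n := n) hR]

lemma exists_cell_iff_inCell (hR : 0 < R) {p : Fin n → ℝ × ℝ} (hsq : ∀ v, inSquare n (p v)) :
    ∃ cell : Fin n → Fin (numCells n R) × Fin (numCells n R),
      ∀ v c, inCell n R c.1 c.2 (p v) ↔ cell v = c := by
  let idx : ℝ → ℕ := fun t => min ⌊t / cellLen n R⌋₊ (numCells n R - 1)
  have hidx (v : Fin n) (t : ℝ) : idx t < numCells n R := by
    have := numCells_pos v.pos hR
    simp only [idx]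
    omega
  refine ⟨fun v => (⟨idx (p v).1, hidx v _⟩, ⟨idx (p v).2, hidx v _⟩), fun v c => ?_⟩
  obtain ⟨h₁, h₂, h₃, h₄⟩ := hsq v
  rw [inCell_iff, inStrip_iff v.pos hR h₁ h₂ c.1.2, inStrip_iff v.pos hR h₃ h₄ c.2.2,
    Prod.ext_iff, Fin.ext_iff, Fin.ext_iff]
  exact and_congr eq_comm eq_comm

end Cells

lemma mul_sq_le_of_isoperimetric {lam R n c N P q B : ℝ} (hlam : 1 ≤ lam) (hc₀ : 0 ≤ c)
    (hc : c ≤ n / 2) (hRn : R ^ 2 / lam ≤ n) (hB : 0 ≤ B) (hcP : c ≤ P * (lam * R ^ 2))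
    (hBN : B * (R ^ 2 / lam) ≤ N) (hqN : n - q * (lam * R ^ 2) - c ≤ N)
    (hmin : min P q ≤ B ^ 2) :
    c * R ^ 2 ≤ 8 * lam ^ 4 * N ^ 2 := by
  have hlam₀ : 0 < lam := by linarith
  -- Either the cells missed by `I` hold few nodes, and then `N ≥ n / 4`, or `c` is at most
  -- `2 λ R² q` as well as `λ R² P`.
  by_cases hq : q * (lam * R ^ 2) ≤ n / 4
  · have hn : 0 ≤ n := (div_nonneg (sq_nonneg R) hlam₀.le).trans hRn
    have hN : n / 4 ≤ N := by linarith
    have hR : R ^ 2 ≤ lam * n := by rwa [div_le_iff₀ hlam₀, mul_comm] at hRn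
    calc c * R ^ 2 ≤ n / 2 * (lam * n) := mul_le_mul hc hR (sq_nonneg R) (by positivity)
      _ ≤ 8 * lam ^ 4 * (n / 4) ^ 2 := by
        have : lam ≤ lam ^ 4 := le_self_pow₀ hlam (by norm_num)
        nlinarith [mul_nonneg hn hn]
      _ ≤ 8 * lam ^ 4 * N ^ 2 := by gcongr
  · have hcB : c ≤ 2 * lam * R ^ 2 * B ^ 2 := by
      have hlamR : 0 ≤ lam * R ^ 2 := by positivity
      have : c ≤ 2 * lam * R ^ 2 * min P q := by
        rcases min_cases P q with ⟨h, -⟩ | ⟨h, -⟩ <;> rw [h] <;> nlinarith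
      nlinarith
    have hBN' : R ^ 4 * B ^ 2 ≤ lam ^ 2 * N ^ 2 := by
      have := pow_le_pow_left₀ (by positivity) hBN 2
      rw [mul_pow, div_pow] at this
      field_simp at this
      linarith
    calc c * R ^ 2 ≤ 2 * lam * (R ^ 4 * B ^ 2) := by nlinarith
      _ ≤ 2 * lam * (lam ^ 2 * N ^ 2) := by gcongr
      _ ≤ 8 * lam ^ 4 * N ^ 2 := by
        have : lam ^ 3 ≤ 4 * lam ^ 4 := by nlinarith [pow_pos hlam₀ 3]
        nlinarith [mul_le_mul_of_nonneg_right this (sq_nonneg N)]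

section CellPartition

lemma card_filter_mem_eq_sum {α β : Type*} [Fintype α] [DecidableEq β] (f : α → β)
    (C : Finset β) : #{x | f x ∈ C} = ∑ c ∈ C, #{x | f x = c} := by
  rw [card_eq_sum_card_fiberwise (f := f) (t := C) fun x hx => by simpa using hx]
  refine sum_congr rfl fun c hc => congrArg card ?_
  ext x
  simp +contextual [hc]

variable {n m : ℕ} {G : SimpleGraph (Fin n)} {cell : Fin n → Fin m × Fin m} {I : Finset (Fin n)}

lemma mem_nbhd {v : Fin n} : v ∈ nbhd G I ↔ v ∉ I ∧ ∃ u ∈ I, G.Adj u v := by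
  simp [nbhd]

lemma filter_mem_image_sdiff_subset_nbhd
    (hadj : ∀ u v, u ≠ v → cell u = cell v ∨ (squareGrid m).Adj (cell u) (cell v) → G.Adj u v) :
    ({v | cell v ∈ I.image cell} : Finset (Fin n)) \ I ⊆ nbhd G I := by
  intro v hv
  obtain ⟨hv, hvI⟩ := mem_sdiff.1 hv
  obtain ⟨u, hu, huv⟩ := mem_image.1 (mem_filter.1 hv).2
  exact mem_nbhd.2 ⟨hvI, u, hu, hadj u v (by rintro rfl; exact hvI hu) (Or.inl huv)⟩

lemma filter_mem_vertexBoundary_subset_nbhd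
    (hadj : ∀ u v, u ≠ v → cell u = cell v ∨ (squareGrid m).Adj (cell u) (cell v) → G.Adj u v) :
    ({v | cell v ∈ vertexBoundary (squareGrid m) (I.image cell)} : Finset (Fin n)) ⊆ nbhd G I := by
  intro v hv
  obtain ⟨hvP, e, he, hev⟩ := mem_vertexBoundary.1 (mem_filter.1 hv).2
  obtain ⟨u, hu, rfl⟩ := mem_image.1 he
  refine mem_nbhd.2 ⟨fun hvI => hvP (mem_image_of_mem cell hvI), u, hu, hadj u v ?_ (Or.inr hev)⟩
  rintro rfl
  exact hev.ne rfl

theorem card_mul_sq_le_card_nbhd_sq {lam R : ℝ} (hlam : 1 ≤ lam)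
    (hadj : ∀ u v, u ≠ v → cell u = cell v ∨ (squareGrid m).Adj (cell u) (cell v) → G.Adj u v)
    (hfib : ∀ c, R ^ 2 / lam ≤ #{v | cell v = c} ∧ (#{v | cell v = c} : ℝ) ≤ lam * R ^ 2)
    (hI : I.Nonempty) (hIn : (#I : ℝ) ≤ n / 2) :
    #I * R ^ 2 ≤ 8 * lam ^ 4 * #(nbhd G I) ^ 2 := by
  set P := I.image cell
  set B := vertexBoundary (squareGrid m) P
  have fiber_sum (C : Finset (Fin m × Fin m)) :
      (#{v | cell v ∈ C} : ℝ) = ∑ c ∈ C, (#{v | cell v = c} : ℝ) := by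
    exact_mod_cast card_filter_mem_eq_sum cell C
  have upper (C : Finset (Fin m × Fin m)) : (#{v | cell v ∈ C} : ℝ) ≤ #C * (lam * R ^ 2) := by
    rw [fiber_sum, ← nsmul_eq_mul, ← sum_const]
    exact sum_le_sum fun c _ => (hfib c).2
  have lower (C : Finset (Fin m × Fin m)) : #C * (R ^ 2 / lam) ≤ #{v | cell v ∈ C} := by
    rw [fiber_sum, ← nsmul_eq_mul, ← sum_const]
    exact sum_le_sum fun c _ => (hfib c).1
  obtain ⟨u, hu⟩ := hI
  have hRn : R ^ 2 / lam ≤ n :=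
    (hfib (cell u)).1.trans (by exact_mod_cast (card_le_univ _).trans_eq (Fintype.card_fin n))
  have hIP : (#I : ℝ) ≤ #P * (lam * R ^ 2) := by
    refine le_trans ?_ (upper P)
    exact_mod_cast card_le_card fun v hv => mem_filter.2 ⟨mem_univ v, mem_image_of_mem cell hv⟩
  have hBN : #B * (R ^ 2 / lam) ≤ #(nbhd G I) := by
    refine (lower B).trans ?_
    exact_mod_cast card_le_card (filter_mem_vertexBoundary_subset_nbhd hadj)
  have hPcN : n - #Pᶜ * (lam * R ^ 2) - #I ≤ #(nbhd G I) := by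
    have hsplit : #{v | cell v ∈ P} + #{v | cell v ∈ Pᶜ} = n := by
      simpa only [mem_compl, card_univ, Fintype.card_fin] using
        card_filter_add_card_filter_not (s := univ) (fun v => cell v ∈ P)
    have hsdiff := (card_le_card_sdiff_add_card (s := {v | cell v ∈ P}) (t := I)).trans
      (Nat.add_le_add_right (card_le_card (filter_mem_image_sdiff_subset_nbhd hadj)) _)
    have hsplitR : (n : ℝ) = #{v | cell v ∈ P} + #{v | cell v ∈ Pᶜ} := by
      exact_mod_cast hsplit.symm
    have hsdiffR : (#{v | cell v ∈ P} : ℝ) ≤ #(nbhd G I) + #I := by exact_mod_cast hsdiff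
    linarith [upper Pᶜ]
  have hmin : min (#P : ℝ) #Pᶜ ≤ #B ^ 2 := by
    exact_mod_cast min_card_le_card_vertexBoundary_sq P
  exact mul_sq_le_of_isoperimetric hlam (Nat.cast_nonneg _) hIn hRn (Nat.cast_nonneg _) hIP hBN
    hPcN hmin

theorem isExpander_of_cellPartition {lam R h : ℝ} (hlam : 1 ≤ lam)
    (hadj : ∀ u v, u ≠ v → cell u = cell v ∨ (squareGrid m).Adj (cell u) (cell v) → G.Adj u v)
    (hfib : ∀ c, R ^ 2 / lam ≤ #{v | cell v = c} ∧ (#{v | cell v = c} : ℝ) ≤ lam * R ^ 2)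
    (hh : h ≤ n / 2) : IsExpander G h (1 / (8 * lam ^ 2) * R / Real.sqrt h) := by
  intro I hI hIh
  have hc : (0 : ℝ) < #I := by exact_mod_cast hI.card_pos
  have hh₀ : 0 < h := hc.trans_le hIh
  have key := card_mul_sq_le_card_nbhd_sq hlam hadj hfib hI (hIh.trans hh)
  refine le_of_sq_le_sq ?_ (Nat.cast_nonneg _)
  rw [div_mul_eq_mul_div, div_pow, Real.sq_sqrt hh₀.le, div_le_iff₀ hh₀]
  calc (1 / (8 * lam ^ 2) * R * #I) ^ 2 = #I * (#I * R ^ 2) / (64 * lam ^ 4) := by ring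
    _ ≤ h * (8 * lam ^ 4 * #(nbhd G I) ^ 2) / (64 * lam ^ 4) := by gcongr
    _ ≤ #(nbhd G I) ^ 2 * h := by
      have hlam₀ : 0 < lam := by linarith
      field_simp
      nlinarith [sq_nonneg (#(nbhd G I) : ℝ)]

end CellPartition

theorem geo_expander_large_general (n : ℕ) (lam R : ℝ) (hlam : 1 ≤ lam) (hR : 0 < R)
    (p : Fin n → ℝ × ℝ) (hsq : ∀ v, inSquare n (p v))
    (hcell : ∀ i j : ℕ, i < numCells n R → j < numCells n R →
      R ^ 2 / lam ≤ (cellCount n R p i j : ℝ) ∧ (cellCount n R p i j : ℝ) ≤ lam * R ^ 2)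
    (h : ℝ) (h2 : h ≤ (n : ℝ) / 2) :
    IsExpander (geoGraph n R p) h ((1 / (8 * lam ^ 2)) * R / Real.sqrt h) := by
  obtain ⟨cell, hcell_iff⟩ := exists_cell_iff_inCell hR hsq
  have hinCell (v : Fin n) := (hcell_iff v (cell v)).2 rfl
  refine isExpander_of_cellPartition (cell := cell) hlam (fun u v huv hnear => ?_) (fun c => ?_) h2
  · refine (fromRel_adj _ u v).2 ⟨huv, Or.inl ?_⟩
    exact euclDist_le_of_inCell hR (hsq u) (hsq v) (hinCell u) (hinCell v)
      (abs_sub_add_abs_sub_le_one hnear)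
  · have hcount : cellCount n R p c.1 c.2 = #{v | cell v = c} := by
      classical
      unfold cellCount
      exact congrArg card (filter_congr fun v _ => hcell_iff v c)
    exact hcount ▸ hcell c.1 c.2 c.1.2 c.2.2

/-- expansion of the geometric graph for large sets. -/
theorem geo_expander_large (n : ℕ) (lam R : ℝ) (hlam : 1 ≤ lam) (hR : 0 < R)
    (hRn : R ≤ Real.sqrt n)
    (p : Fin n → ℝ × ℝ) (hsq : ∀ v, inSquare n (p v))
    (hcell : ∀ i j : ℕ, i < numCells n R → j < numCells n R →
      R ^ 2 / lam ≤ (cellCount n R p i j : ℝ) ∧ (cellCount n R p i j : ℝ) ≤ lam * R ^ 2)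
    (h : ℝ) (h1 : (1 / (2 * lam)) * R ^ 2 ≤ h) (h2 : h ≤ (n : ℝ) / 2) :
    IsExpander (geoGraph n R p) h ((1 / (8 * lam ^ 2)) * R / Real.sqrt h) :=
  geo_expander_large_general n lam R hlam hR p hsq hcell h h2

end
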